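/- For any linear order on {E,D,N} with N < E, the sum of q^{maj(W)} over all Schröder paths from (0,0) to (n,n) with l steps equals (q^{l-n}/[l-n+1]_q) · qbinom(2(l-n), l-n) · qbinom(l, 2n-l). -/

import Mathlib

inductive Step : Type
  | E | D | N
deriving DecidableEq

instance : Fintype Step :=
  ⟨{Step.E, Step.D, Step.N}, fun x => by cases x <;> simp⟩

open Step Polynomial

/-- All words of length `l` over the step alphabet. -/
def Words (l : ℕ) : Finset (List Step) :=
  (Finset.univ : Finset (Fin l → Step)).image List.ofFn

/-- Delannoy paths from (0,0) to (m,n) with `l` steps, encoded as words: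
`#E + #D = m`, `#N + #D = n`, length `l`. -/
def DelSet (m n l : ℕ) : Finset (List Step) :=
  (Words l).filter fun w => w.count E + w.count D = m ∧ w.count N + w.count D = n

/-- A word is bad if some prefix contains more N's than E's. -/
def bad (w : List Step) : Bool :=
  (List.range (w.length + 1)).any fun k => (w.take k).count E < (w.take k).count N

/-- Bad Delannoy paths from (0,0) to (n,n) with `l` steps. -/
def BDelSet (n l : ℕ) : Finset (List Step) :=
  (DelSet n n l).filter fun w => bad w

/-- Schröder paths: Delannoy paths to (n,n) never going above the diagonal. -/
def SchSet (n l : ℕ) : Finset (List Step) :=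
  (DelSet n n l).filter fun w => ¬ bad w

/-- Major index of a word w_1 ⋯ w_l with respect to a ranking of the letters:
the sum of all positions i (1 ≤ i ≤ l-1) with w_i > w_{i+1}. -/
def maj (rank : Step → ℕ) (w : List Step) : ℕ :=
  ∑ i ∈ Finset.range (w.length - 1),
    if rank (w.getD (i + 1) E) < rank (w.getD i E) then i + 1 else 0

/-- q-integer [m] = 1 + q + ⋯ + q^{m-1}. -/
noncomputable def qint (m : ℕ) : Polynomial ℚ :=
  ∑ i ∈ Finset.range m, X ^ i

/-- q-factorial. -/
noncomputable def qfact : ℕ → Polynomial ℚ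
  | 0 => 1
  | m + 1 => qfact m * qint (m + 1)

/-- Gaussian binomial coefficient, via the q-Pascal recurrence. -/
noncomputable def qbinom : ℕ → ℕ → Polynomial ℚ
  | _, 0 => 1
  | 0, _ + 1 => 0
  | m + 1, k + 1 => qbinom m k + X ^ (k + 1) * qbinom m (k + 1)

/-- q-trinomial coefficient [l]!/([a]![b]![c]!), defined when a+b+c = l. -/
noncomputable def qbinom3 (l a b c : ℕ) : Polynomial ℚ :=
  if a + b + c = l then qbinom l a * qbinom (l - a) b else 0

/-- Depth after the first `i` steps: #N − #E. -/
def depth (w : List Step) (i : ℕ) : ℤ :=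
  ((w.take i).count N : ℤ) - (w.take i).count E

/-- `k` (0 ≤ k ≤ l) achieves the maximal running depth. -/
def isMaxDepth (w : List Step) (k : ℕ) : Bool :=
  (List.range (w.length + 1)).all fun i => decide (depth w i ≤ depth w k)

/-- The first index (number of steps) at which the running depth is maximal. -/
def firstDeep (w : List Step) : ℕ :=
  (List.range (w.length + 1)).findIdx (isMaxDepth w)

/-- The last index at which the running depth is maximal. -/
def lastDeep (w : List Step) : ℕ :=
  w.length - (List.range (w.length + 1)).reverse.findIdx (isMaxDepth w)

/-- Replace the first deepest step (the step w_k, k = firstDeep) with E. -/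
def phi (w : List Step) : List Step := w.set (firstDeep w - 1) E

/-- Replace the step following the last deepest point with N. -/
def phiInv (w : List Step) : List Step := w.set (lastDeep w) N

/-- Number of consecutive D's immediately after the first deepest step. -/
def runS (w : List Step) : ℕ := ((w.drop (firstDeep w)).takeWhile (· == D)).length

/-- Number of consecutive D's immediately before the first deepest step. -/
def runR (w : List Step) : ℕ :=
  ((w.take (firstDeep w - 1)).reverse.takeWhile (· == D)).length

/-- The window map: replace W₁ = D^r w_k D^s by D^{r-1} E D^{s+1} if r ≥ 1,
and by D^s E if r = 0. -/
def phiWin (w : List Step) : List Step :=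
  let k := firstDeep w - 1
  let r := runR w
  let s := runS w
  let seg : List Step :=
    if 1 ≤ r then List.replicate (r - 1) D ++ [E] ++ List.replicate (s + 1) D
    else List.replicate s D ++ [E]
  w.take (k - r) ++ seg ++ w.drop (k + s + 1)

/-- 0-based index of the first step after which the path is above the diagonal. -/
def firstAbove (w : List Step) : ℕ :=
  (List.range w.length).findIdx fun i =>
    decide ((w.take (i + 1)).count E < (w.take (i + 1)).count N)

/-- The map ψ of Bonin–Shapiro–Simion: replace with E the last N of the maximal
run of consecutive N's beginning at the first step going above the diagonal. -/
def psi (w : List Step) : List Step :=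
  let i := firstAbove w
  let j := i + ((w.drop i).takeWhile (· == N)).length - 1
  w.set j E


/-!
Sort words by their last letter. Appending `x` to a word `u` adds `|u|` to `maj` exactly when `x`
is ranked below the last letter of `u`, so the last-letter generating functions satisfy a linear
recursion in the letter multiset. For all words with multiset `x ::ₘ ν` ending in `x` the solution
is `q ^ countAbove rank x ν * qmultinomial ν` (MacMahon); checking the recursion comes down to the
telescoping sum `∑ y, q ^ (…) * [ν.count y]_q = q ^ (…) * [|ν|]_q`.

For ballot words the last-letter functions are those of all words minus those of all words in
which one `N` has become an `E` (a reflection principle for `maj`): both sides satisfy the same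
recursion. At the boundary, a word one step above the diagonal followed by a final `E`, they agree
because `qmultinomial` is symmetric in the counts of `E` and `N` and, as `N < E`, neither letter
is ranked above `E`. Appending a letter of maximal rank does not change `maj`, so the Schröder sum
is `qmultinomial (m, m, d) - qmultinomial (m + 1, m - 1, d)`, which is the stated product.
-/

instance : Nonempty Step := ⟨E⟩

@[to_additive]
lemma Step.prod_univ {M : Type*} [CommMonoid M] (f : Step → M) :
    ∏ y, f y = f E * f N * f D := by
  rw [show (Finset.univ : Finset Step) = {E, N, D} by decide, Finset.prod_insert (by decide),
    Finset.prod_pair (by decide), mul_assoc]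

lemma qint_mul_X_sub_one (m : ℕ) : qint m * (X - 1) = X ^ m - 1 := geom_sum_mul X m

lemma qint_succ (m : ℕ) : qint (m + 1) = qint m + X ^ m := Finset.sum_range_succ _ _

lemma qint_add (u v : ℕ) : qint (u + v) = qint u + X ^ u * qint v := by
  rw [qint, qint, qint, Finset.sum_range_add, Finset.mul_sum]
  simp only [pow_add]

lemma qint_ne_zero {m : ℕ} (hm : m ≠ 0) : qint m ≠ 0 := by
  intro h
  have := congrArg (eval 1) h
  simp [qint, eval_finsetSum, hm] at this

lemma qfact_ne_zero (m : ℕ) : qfact m ≠ 0 := by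
  induction m with
  | zero => simp [qfact]
  | succ m ih => exact mul_ne_zero ih (qint_ne_zero m.succ_ne_zero)

lemma qbinom_zero_right (m : ℕ) : qbinom m 0 = 1 := by cases m <;> rfl

lemma qbinom_eq_zero_of_lt {m k : ℕ} (h : m < k) : qbinom m k = 0 := by
  induction m generalizing k with
  | zero => obtain ⟨k, rfl⟩ := Nat.exists_eq_add_one.2 h; rfl
  | succ m ih =>
    obtain ⟨k, rfl⟩ := Nat.exists_eq_add_one.2 (Nat.zero_lt_of_lt h)
    simp only [qbinom, ih (by omega : m < k), ih (by omega : m < k + 1), mul_zero, add_zero]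

lemma qbinom_self (m : ℕ) : qbinom m m = 1 := by
  induction m with
  | zero => rfl
  | succ m ih => simp only [qbinom, ih, qbinom_eq_zero_of_lt m.lt_succ_self, mul_zero, add_zero]

lemma qbinom_mul_qfact_mul_qfact {m u v : ℕ} (h : u + v = m) :
    qbinom m u * (qfact u * qfact v) = qfact m := by
  induction m generalizing u v with
  | zero =>
    obtain ⟨rfl, rfl⟩ : u = 0 ∧ v = 0 := by omega
    simp [qbinom, qfact]
  | succ m ih =>
    rcases u with _ | u
    · obtain rfl : v = m + 1 := by omega
      simp [qbinom_zero_right, qfact]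
    rcases v with _ | v
    · obtain rfl : u = m := by omega
      simp [qbinom_self, qfact]
    have h1 := ih (u := u) (v := v + 1) (by omega)
    have h2 := ih (u := u + 1) (v := v) (by omega)
    have hsplit : qint (m + 1) = qint (u + 1) + X ^ (u + 1) * qint (v + 1) := by
      rw [← qint_add]; congr 1; omega
    simp only [qbinom, qfact] at h1 h2 ⊢
    linear_combination qint (u + 1) * h1 + X ^ (u + 1) * qint (v + 1) * h2 - qfact m * hsplit

noncomputable def qmultinomial (ν : Multiset Step) : ℚ[X] :=
  qbinom (Multiset.card ν) (ν.count E) * qbinom (ν.count N + ν.count D) (ν.count N)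

lemma card_eq_count_E_add_count_N_add_count_D (ν : Multiset Step) :
    Multiset.card ν = ν.count E + ν.count N + ν.count D := by
  rw [← Multiset.sum_count_eq_card (s := Finset.univ) (fun _ _ => Finset.mem_univ _),
    Step.sum_univ]

lemma qmultinomial_mul_prod_qfact (ν : Multiset Step) :
    qmultinomial ν * ∏ y, qfact (ν.count y) = qfact (Multiset.card ν) := by
  have hE := qbinom_mul_qfact_mul_qfact
    ((card_eq_count_E_add_count_N_add_count_D ν).trans (add_assoc _ _ _)).symm
  have hND := qbinom_mul_qfact_mul_qfact (rfl : ν.count N + ν.count D = _)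
  rw [qmultinomial, Step.prod_univ]
  linear_combination qbinom (Multiset.card ν) (ν.count E) * qfact (ν.count E) * hND + hE

lemma prod_qfact_ne_zero (ν : Multiset Step) : ∏ y, qfact (ν.count y) ≠ 0 :=
  Finset.prod_ne_zero_iff.2 fun _ _ => qfact_ne_zero _

lemma eq_qmultinomial_of_mul_prod_qfact {P : ℚ[X]} {ν : Multiset Step}
    (h : P * ∏ y, qfact (ν.count y) = qfact (Multiset.card ν)) : P = qmultinomial ν :=
  mul_right_cancel₀ (prod_qfact_ne_zero ν) (h.trans (qmultinomial_mul_prod_qfact ν).symm)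

lemma prod_qfact_count_cons (y : Step) (ν : Multiset Step) :
    ∏ z, qfact ((y ::ₘ ν).count z) = qint (ν.count y + 1) * ∏ z, qfact (ν.count z) := by
  simp only [Step.prod_univ, Multiset.count_cons]
  cases y <;> simp [qfact] <;> ring

lemma qint_card_mul_qmultinomial_erase {y : Step} {ν : Multiset Step} (hy : y ∈ ν) :
    qint (Multiset.card ν) * qmultinomial (ν.erase y) = qint (ν.count y) * qmultinomial ν := by
  obtain ⟨ν, rfl⟩ := Multiset.exists_cons_of_mem hy
  rw [Multiset.erase_cons_head, Multiset.card_cons, Multiset.count_cons_self]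
  refine mul_right_cancel₀ (prod_qfact_ne_zero ν) ?_
  have hcons := qmultinomial_mul_prod_qfact (y ::ₘ ν)
  rw [prod_qfact_count_cons, Multiset.card_cons] at hcons
  have hfact : qfact (Multiset.card ν + 1) =
      qfact (Multiset.card ν) * qint (Multiset.card ν + 1) := rfl
  linear_combination qint (Multiset.card ν + 1) * qmultinomial_mul_prod_qfact ν - hcons - hfact

lemma qmultinomial_cons_erase_of_count_eq {ν : Multiset Step} (h : ν.count N = ν.count E + 1) :
    qmultinomial (E ::ₘ ν.erase N) = qmultinomial ν := by
  have hN : N ∈ ν := Multiset.count_pos.1 (by omega)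
  symm
  apply eq_qmultinomial_of_mul_prod_qfact
  rw [Multiset.card_cons, Multiset.card_erase_add_one hN, ← qmultinomial_mul_prod_qfact]
  have hcountE : (E ::ₘ ν.erase N).count E = ν.count N := by
    rw [Multiset.count_cons_self, Multiset.count_erase_of_ne (by decide), h]
  have hcountN : (E ::ₘ ν.erase N).count N = ν.count E := by
    rw [Multiset.count_cons_of_ne (by decide), Multiset.count_erase_self, h, Nat.add_sub_cancel]
  have hcountD : (E ::ₘ ν.erase N).count D = ν.count D := by
    rw [Multiset.count_cons_of_ne (by decide), Multiset.count_erase_of_ne (by decide)]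
  rw [Step.prod_univ, Step.prod_univ, hcountE, hcountN, hcountD, mul_comm (qfact (ν.count N))]

def countAbove (rank : Step → ℕ) (x : Step) (ν : Multiset Step) : ℕ :=
  ∑ z with rank x < rank z, ν.count z

lemma sum_pow_mul_qint_count {rank : Step → ℕ} (hrank : Function.Injective rank)
    (ν : Multiset Step) (x : Step) :
    ∑ y, X ^ (if rank x < rank y then Multiset.card ν else 0) *
        (X ^ countAbove rank y ν * qint (ν.count y)) =
      X ^ countAbove rank x ν * qint (Multiset.card ν) := by
  refine mul_right_cancel₀ (X_sub_C_ne_zero 1) ?_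
  simp only [C_1, Finset.sum_mul, mul_assoc, qint_mul_X_sub_one]
  simp only [card_eq_count_E_add_count_N_add_count_D, countAbove, Finset.sum_filter,
    Step.sum_univ]
  have hEN : rank E ≠ rank N := hrank.ne (by decide)
  have hED : rank E ≠ rank D := hrank.ne (by decide)
  have hND : rank N ≠ rank D := hrank.ne (by decide)
  rcases hEN.lt_or_gt with h₁ | h₁ <;> rcases hED.lt_or_gt with h₂ | h₂ <;>
    rcases hND.lt_or_gt with h₃ | h₃ <;>
    first
    | (exfalso; omega)
    | (cases x <;> simp [h₁, h₂, h₃, lt_asymm h₁, lt_asymm h₂, lt_asymm h₃] <;> ring)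

lemma sum_pow_mul_qmultinomial_erase {rank : Step → ℕ} (hrank : Function.Injective rank)
    {ν : Multiset Step} (hν : ν ≠ 0) (x : Step) :
    ∑ y, X ^ (if rank x < rank y then Multiset.card ν else 0) *
        (if y ∈ ν then X ^ countAbove rank y ν * qmultinomial (ν.erase y) else 0) =
      X ^ countAbove rank x ν * qmultinomial ν := by
  have hterm : ∀ y, qint (Multiset.card ν) *
      (if y ∈ ν then X ^ countAbove rank y ν * qmultinomial (ν.erase y) else 0) =
        X ^ countAbove rank y ν * qint (ν.count y) * qmultinomial ν := by
    intro y
    split_ifs with hy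
    · rw [mul_left_comm, qint_card_mul_qmultinomial_erase hy, mul_assoc]
    · simp [Multiset.count_eq_zero.2 hy, qint]
  refine mul_left_cancel₀ (qint_ne_zero (Multiset.card_pos.2 hν).ne') ?_
  calc _ = (∑ y, X ^ (if rank x < rank y then Multiset.card ν else 0) *
        (X ^ countAbove rank y ν * qint (ν.count y))) * qmultinomial ν := by
        simp only [Finset.mul_sum, Finset.sum_mul, mul_left_comm _ (X ^ ite _ _ _), hterm]
        exact Finset.sum_congr rfl fun _ _ => by ring
    _ = _ := by rw [sum_pow_mul_qint_count hrank]; ring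

lemma maj_append_singleton (rank : Step → ℕ) {u : List Step} (hu : u ≠ []) (x : Step) :
    maj rank (u ++ [x]) =
      maj rank u + if rank x < rank (u.getLast hu) then u.length else 0 := by
  obtain ⟨n, hn⟩ : ∃ n, u.length = n + 1 := Nat.exists_eq_add_one.2 (List.length_pos_iff.2 hu)
  have hlen : (u ++ [x]).length - 1 = n + 1 := by simp [hn]
  rw [maj, maj, hlen, hn, Nat.add_sub_cancel, Finset.sum_range_succ]
  congr 1
  · refine Finset.sum_congr rfl fun i hi => ?_
    have hi : i < n := Finset.mem_range.1 hi
    rw [List.getD_append _ _ _ _ (by omega), List.getD_append _ _ _ _ (by omega)]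
  · have hlast : (u ++ [x]).getD n E = u.getLast hu := by
      rw [List.getD_append _ _ _ _ (by omega), List.getLast_eq_getElem,
        List.getD_eq_getElem _ _ (by omega)]
      simp [hn]
    have hx : (u ++ [x]).getD (n + 1) E = x := by
      rw [List.getD_append_right _ _ _ _ (by omega)]
      simp [hn]
    rw [hlast, hx]

lemma not_bad_iff {w : List Step} :
    ¬ bad w ↔ ∀ k, (w.take k).count N ≤ (w.take k).count E := by
  simp only [bad, List.any_eq_true, List.mem_range, not_exists, not_and, decide_eq_true_eq,
    not_lt]
  refine ⟨fun h k => ?_, fun h k _ => h k⟩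
  rcases le_or_gt k w.length with hk | hk
  · exact h k (by omega)
  · simpa [List.take_of_length_le hk.le] using h w.length (by omega)

lemma not_bad_append_singleton {u : List Step} {x : Step} :
    ¬ bad (u ++ [x]) ↔ ¬ bad u ∧ (u ++ [x]).count N ≤ (u ++ [x]).count E := by
  rw [not_bad_iff, not_bad_iff]
  refine ⟨fun h => ⟨fun k => ?_, ?_⟩, fun ⟨hu, hux⟩ k => ?_⟩
  · rcases le_or_gt k u.length with hk | hk
    · simpa [List.take_append_of_le_length hk] using h k
    · simpa [List.take_of_length_le hk.le] using h u.length
  · simpa [List.take_of_length_le] using h (u.length + 1)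
  · rcases le_or_gt k u.length with hk | hk
    · simpa [List.take_append_of_le_length hk] using hu k
    · rwa [List.take_of_length_le (by simp; omega)]

lemma mem_Words {l : ℕ} {w : List Step} : w ∈ Words l ↔ w.length = l := by
  simp only [Words, Finset.mem_image, Finset.mem_univ, true_and]
  exact ⟨by rintro ⟨f, rfl⟩; simp, by rintro rfl; exact ⟨w.get, List.ofFn_get w⟩⟩

def wordsOf (ν : Multiset Step) : Finset (List Step) :=
  (Words (Multiset.card ν)).filter fun w => (w : Multiset Step) = ν

def ballotWords (ν : Multiset Step) : Finset (List Step) :=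
  (wordsOf ν).filter fun w => ¬ bad w

lemma mem_wordsOf {ν : Multiset Step} {w : List Step} :
    w ∈ wordsOf ν ↔ (w : Multiset Step) = ν := by
  simp only [wordsOf, Finset.mem_filter, mem_Words, and_iff_right_iff_imp]
  rintro rfl
  rfl

lemma mem_ballotWords {ν : Multiset Step} {w : List Step} :
    w ∈ ballotWords ν ↔ (w : Multiset Step) = ν ∧ ¬ bad w := by
  rw [ballotWords, Finset.mem_filter, mem_wordsOf]

lemma ballotWords_subset_wordsOf (ν : Multiset Step) : ballotWords ν ⊆ wordsOf ν :=
  Finset.filter_subset _ _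

lemma ballotWords_eq_empty {ν : Multiset Step} (h : ν.count E < ν.count N) :
    ballotWords ν = ∅ := by
  refine Finset.eq_empty_of_forall_notMem fun w hw => ?_
  obtain ⟨rfl, hbad⟩ := mem_ballotWords.1 hw
  have := not_bad_iff.1 hbad w.length
  rw [List.take_length] at this
  simp only [Multiset.coe_count] at h
  omega

lemma coe_append_singleton {α : Type*} (u : List α) (x : α) :
    ((u ++ [x] : List α) : Multiset α) = x ::ₘ u := by
  rw [Multiset.cons_coe, Multiset.coe_eq_coe]
  exact List.perm_append_singleton x u

noncomputable def lastGF (rank : Step → ℕ) (S : Finset (List Step)) (x : Step) : ℚ[X] :=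
  ∑ w ∈ S with w.getLast? = some x, X ^ maj rank w

lemma lastGF_eq_zero_of_subset_wordsOf {rank : Step → ℕ} {S : Finset (List Step)}
    {ν : Multiset Step} {x : Step} (hS : S ⊆ wordsOf ν) (hx : x ∉ ν) :
    lastGF rank S x = 0 := by
  refine Finset.sum_eq_zero fun w hw => absurd ?_ hx
  obtain ⟨hwS, hlast⟩ := Finset.mem_filter.1 hw
  rw [← mem_wordsOf.1 (hS hwS)]
  exact Multiset.mem_coe.2 (List.mem_of_getLast? hlast)

def appendSingleton {α : Type*} (x : α) : List α ↪ List α :=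
  ⟨(· ++ [x]), List.append_left_injective [x]⟩

lemma filter_getLast?_wordsOf_cons (x : Step) (ν : Multiset Step) :
    (wordsOf (x ::ₘ ν)).filter (·.getLast? = some x) =
      (wordsOf ν).map (appendSingleton x) := by
  ext w
  simp only [Finset.mem_filter, Finset.mem_map, mem_wordsOf, appendSingleton,
    Function.Embedding.coeFn_mk, List.getLast?_eq_some_iff]
  constructor
  · rintro ⟨hw, u, rfl⟩
    exact ⟨u, Multiset.cons_inj_right x |>.1 ((coe_append_singleton u x).symm.trans hw), rfl⟩
  · rintro ⟨u, rfl, rfl⟩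
    exact ⟨coe_append_singleton u x, u, rfl⟩

lemma filter_getLast?_ballotWords_cons {x : Step} {ν : Multiset Step}
    (h : (x ::ₘ ν).count N ≤ (x ::ₘ ν).count E) :
    (ballotWords (x ::ₘ ν)).filter (·.getLast? = some x) =
      (ballotWords ν).map (appendSingleton x) := by
  rw [ballotWords, Finset.filter_comm, filter_getLast?_wordsOf_cons, ballotWords,
    Finset.filter_map]
  congr 1
  refine Finset.filter_congr fun u hu => ?_
  rw [mem_wordsOf] at hu
  simp only [Function.comp_apply, appendSingleton, Function.Embedding.coeFn_mk,
    not_bad_append_singleton, and_iff_left_iff_imp]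
  intro _
  simpa only [← Multiset.coe_count, coe_append_singleton, hu] using h

lemma sum_pow_maj_append_singleton (rank : Step → ℕ) {S : Finset (List Step)} {L : ℕ}
    (hS : ∀ u ∈ S, u.length = L) (x : Step) :
    ∑ u ∈ S, (X : ℚ[X]) ^ maj rank (u ++ [x]) =
      (if [] ∈ S then 1 else 0) +
        ∑ y, X ^ (if rank x < rank y then L else 0) * lastGF rank S y := by
  rw [← Finset.sum_fiberwise S (·.getLast?), Fintype.sum_option]
  congr 1
  · rw [Finset.filter_congr fun u _ => List.getLast?_eq_none_iff, Finset.sum_filter,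
      Finset.sum_ite_eq']
    simp [maj]
  · refine Finset.sum_congr rfl fun y _ => ?_
    rw [lastGF, Finset.mul_sum]
    refine Finset.sum_congr rfl fun u hu => ?_
    obtain ⟨huS, hlast⟩ := Finset.mem_filter.1 hu
    have hne : u ≠ [] := by rintro rfl; simp at hlast
    have hy : u.getLast hne = y :=
      Option.some_injective _ ((List.getLast?_eq_some_getLast hne).symm.trans hlast)
    rw [maj_append_singleton rank hne, hy, pow_add, hS u huS, mul_comm]

lemma lastGF_wordsOf_cons_eq (rank : Step → ℕ) (x : Step) (ν : Multiset Step) :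
    lastGF rank (wordsOf (x ::ₘ ν)) x =
      (if ν = 0 then 1 else 0) +
        ∑ y, X ^ (if rank x < rank y then Multiset.card ν else 0) *
          lastGF rank (wordsOf ν) y := by
  rw [lastGF, filter_getLast?_wordsOf_cons, Finset.sum_map]
  refine (sum_pow_maj_append_singleton rank (L := Multiset.card ν) (fun u hu => ?_) x).trans ?_
  · rw [← mem_wordsOf.1 hu, Multiset.coe_card]
  · simp only [mem_wordsOf, Multiset.coe_nil, eq_comm]

lemma lastGF_ballotWords_cons_eq (rank : Step → ℕ) {x : Step} {ν : Multiset Step}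
    (h : (x ::ₘ ν).count N ≤ (x ::ₘ ν).count E) :
    lastGF rank (ballotWords (x ::ₘ ν)) x =
      (if ν = 0 then 1 else 0) +
        ∑ y, X ^ (if rank x < rank y then Multiset.card ν else 0) *
          lastGF rank (ballotWords ν) y := by
  rw [lastGF, filter_getLast?_ballotWords_cons h, Finset.sum_map]
  refine (sum_pow_maj_append_singleton rank (L := Multiset.card ν) (fun u hu => ?_) x).trans ?_
  · rw [← (mem_ballotWords.1 hu).1, Multiset.coe_card]
  · simp only [mem_ballotWords, Multiset.coe_nil, eq_comm]
    congr 1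
    simp [bad]

lemma lastGF_wordsOf_of_notMem (rank : Step → ℕ) {x : Step} {ν : Multiset Step}
    (hx : x ∉ ν) :
    lastGF rank (wordsOf ν) x = 0 :=
  lastGF_eq_zero_of_subset_wordsOf subset_rfl hx

lemma countAbove_congr {rank : Step → ℕ} {x : Step} {ν ν' : Multiset Step}
    (h : ∀ z, rank x < rank z → ν.count z = ν'.count z) :
    countAbove rank x ν = countAbove rank x ν' :=
  Finset.sum_congr rfl fun z hz => h z (Finset.mem_filter.1 hz).2

lemma countAbove_erase_self (rank : Step → ℕ) (x : Step) (ν : Multiset Step) :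
    countAbove rank x (ν.erase x) = countAbove rank x ν :=
  countAbove_congr fun _ hz =>
    Multiset.count_erase_of_ne (fun h => (h ▸ hz).false) ν

theorem lastGF_wordsOf_cons {rank : Step → ℕ} (hrank : Function.Injective rank)
    (x : Step) (ν : Multiset Step) :
    lastGF rank (wordsOf (x ::ₘ ν)) x = X ^ countAbove rank x ν * qmultinomial ν := by
  induction hn : Multiset.card ν using Nat.strong_induction_on generalizing x ν with
  | _ n ih =>
  rw [lastGF_wordsOf_cons_eq]
  rcases eq_or_ne ν 0 with rfl | hν
  · simp [lastGF_wordsOf_of_notMem, countAbove, qmultinomial, qbinom_zero_right]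
  rw [if_neg hν, zero_add, ← sum_pow_mul_qmultinomial_erase hrank hν x]
  refine Finset.sum_congr rfl fun y _ => congrArg _ ?_
  split_ifs with hy
  · conv_lhs => rw [← Multiset.cons_erase hy]
    rw [ih _ (hn ▸ Multiset.card_erase_lt_of_mem hy) y _ rfl, countAbove_erase_self]
  · exact lastGF_wordsOf_of_notMem rank hy

noncomputable def reflectedGF (rank : Step → ℕ) (ν : Multiset Step) (x : Step) : ℚ[X] :=
  if N ∈ ν then lastGF rank (wordsOf (E ::ₘ ν.erase N)) x else 0

lemma reflectedGF_cons (rank : Step → ℕ) (x : Step) (ν : Multiset Step) :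
    reflectedGF rank (x ::ₘ ν) x =
      ∑ y, X ^ (if rank x < rank y then Multiset.card ν else 0) * reflectedGF rank ν y := by
  by_cases hN : N ∈ ν
  · have hcons : E ::ₘ (x ::ₘ ν).erase N = x ::ₘ E ::ₘ ν.erase N := by
      rw [Multiset.erase_cons_tail_of_mem hN, Multiset.cons_swap]
    simp only [reflectedGF, Multiset.mem_cons_of_mem hN, hN, if_true, hcons]
    rw [lastGF_wordsOf_cons_eq, if_neg Multiset.cons_ne_zero, zero_add, Multiset.card_cons,
      Multiset.card_erase_add_one hN]
  · have hzero : ∀ y, reflectedGF rank ν y = 0 := fun _ => if_neg hN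
    simp only [hzero, mul_zero, Finset.sum_const_zero]
    rw [reflectedGF]
    split_ifs with hxN
    · obtain rfl : N = x := by simpa [hN] using hxN
      rw [Multiset.erase_cons_head]
      exact lastGF_wordsOf_of_notMem rank (by simpa using hN)
    · rfl

lemma reflectedGF_cons_E_of_count_eq {rank : Step → ℕ} (hrank : Function.Injective rank)
    (hNE : rank N < rank E) {ν : Multiset Step} (h : ν.count N = ν.count E + 1) :
    reflectedGF rank (E ::ₘ ν) E = lastGF rank (wordsOf (E ::ₘ ν)) E := by
  have hN : N ∈ ν := Multiset.count_pos.1 (by omega)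
  rw [reflectedGF, if_pos (Multiset.mem_cons_of_mem hN),
    Multiset.erase_cons_tail_of_mem hN, lastGF_wordsOf_cons hrank, lastGF_wordsOf_cons hrank,
    qmultinomial_cons_erase_of_count_eq h]
  congr 2
  refine countAbove_congr fun z hz => ?_
  have hzE : z ≠ E := by rintro rfl; exact lt_irrefl _ hz
  have hzN : z ≠ N := by rintro rfl; exact lt_asymm hz hNE
  rw [Multiset.count_cons_of_ne hzE, Multiset.count_erase_of_ne hzN]

theorem lastGF_ballotWords {rank : Step → ℕ} (hrank : Function.Injective rank)
    (hNE : rank N < rank E) {ν : Multiset Step} (hν : ν.count N ≤ ν.count E) (x : Step) :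
    lastGF rank (ballotWords ν) x = lastGF rank (wordsOf ν) x - reflectedGF rank ν x := by
  induction hn : Multiset.card ν using Nat.strong_induction_on generalizing x ν with
  | _ n ih =>
  by_cases hx : x ∈ ν
  swap
  · rw [lastGF_wordsOf_of_notMem rank hx,
      lastGF_eq_zero_of_subset_wordsOf (ballotWords_subset_wordsOf ν) hx, reflectedGF]
    split_ifs with hN
    · have hE : E ∈ ν := Multiset.count_pos.1 ((Multiset.count_pos.2 hN).trans_le hν)
      have hnot : x ∉ E ::ₘ ν.erase N := by
        rw [Multiset.mem_cons, not_or]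
        exact ⟨fun h => hx (h ▸ hE), fun h => hx (Multiset.mem_of_mem_erase h)⟩
      rw [lastGF_wordsOf_of_notMem rank hnot, sub_zero]
    · rw [sub_zero]
  obtain ⟨ν, rfl⟩ := Multiset.exists_cons_of_mem hx
  rw [lastGF_ballotWords_cons_eq rank hν]
  rcases le_or_gt (ν.count N) (ν.count E) with h | h
  · rw [lastGF_wordsOf_cons_eq, reflectedGF_cons]
    simp only [ih _ (by simp [← hn]) h _ rfl, mul_sub, Finset.sum_sub_distrib]
    ring
  · obtain ⟨rfl, hcount⟩ : x = E ∧ ν.count N = ν.count E + 1 := by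
      cases x <;> simp at hν ⊢ <;> omega
    have hν0 : ν ≠ 0 := by rintro rfl; simp at hcount
    rw [reflectedGF_cons_E_of_count_eq hrank hNE hcount, sub_self, if_neg hν0,
      ballotWords_eq_empty h]
    simp [lastGF]

lemma sum_pow_maj_eq_lastGF_of_forall_le {rank : Step → ℕ} {x : Step}
    (hx : ∀ y, rank y ≤ rank x) {S T : Finset (List Step)}
    (h : T.filter (·.getLast? = some x) = S.map (appendSingleton x)) :
    ∑ w ∈ S, X ^ maj rank w = lastGF rank T x := by
  rw [lastGF, h, Finset.sum_map]
  refine Finset.sum_congr rfl fun u _ => ?_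
  rcases eq_or_ne u [] with rfl | hu
  · rfl
  · simp [appendSingleton, maj_append_singleton rank hu, (hx _).not_gt]

lemma countAbove_eq_zero_of_forall_le {rank : Step → ℕ} {x : Step}
    (hx : ∀ y, rank y ≤ rank x) (ν : Multiset Step) : countAbove rank x ν = 0 :=
  Finset.sum_eq_zero fun z hz => absurd (Finset.mem_filter.1 hz).2 (hx z).not_gt

theorem sum_wordsOf {rank : Step → ℕ} (hrank : Function.Injective rank) (ν : Multiset Step) :
    ∑ w ∈ wordsOf ν, X ^ maj rank w = qmultinomial ν := by
  obtain ⟨x, hx⟩ := Finite.exists_max rank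
  rw [sum_pow_maj_eq_lastGF_of_forall_le hx (filter_getLast?_wordsOf_cons x ν),
    lastGF_wordsOf_cons hrank, countAbove_eq_zero_of_forall_le hx, pow_zero, one_mul]

theorem sum_ballotWords {rank : Step → ℕ} (hrank : Function.Injective rank)
    (hNE : rank N < rank E) {ν : Multiset Step} (hν : ν.count N ≤ ν.count E) :
    ∑ w ∈ ballotWords ν, X ^ maj rank w =
      qmultinomial ν - if N ∈ ν then qmultinomial (E ::ₘ ν.erase N) else 0 := by
  obtain ⟨x, hx⟩ := Finite.exists_max rank
  have hxN : x ≠ N := by rintro rfl; exact (hx E).not_gt hNE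
  have hcons : (x ::ₘ ν).count N ≤ (x ::ₘ ν).count E := by
    rw [Multiset.count_cons_of_ne hxN.symm]
    exact hν.trans (Multiset.count_le_count_cons _ _ _)
  rw [sum_pow_maj_eq_lastGF_of_forall_le hx (filter_getLast?_ballotWords_cons hcons),
    lastGF_ballotWords hrank hNE hcons, ← sum_pow_maj_eq_lastGF_of_forall_le hx
      (filter_getLast?_wordsOf_cons x ν), sum_wordsOf hrank, reflectedGF]
  simp only [Multiset.mem_cons, hxN.symm, false_or]
  split_ifs with hN
  · rw [Multiset.erase_cons_tail_of_mem hN, Multiset.cons_swap,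
      ← sum_pow_maj_eq_lastGF_of_forall_le hx (filter_getLast?_wordsOf_cons x _),
      sum_wordsOf hrank]
  · rfl

lemma qint_mul_qmultinomial_sub {ν : Multiset Step} (hcount : ν.count N = ν.count E) :
    qint (ν.count E + 1) *
        (qmultinomial ν - if N ∈ ν then qmultinomial (E ::ₘ ν.erase N) else 0) =
      X ^ ν.count E * (qbinom (2 * ν.count E) (ν.count E) *
        qbinom (Multiset.card ν) (ν.count D)) := by
  have hcard := card_eq_count_E_add_count_N_add_count_D ν
  split_ifs with hN
  · obtain ⟨k, hk⟩ := Nat.exists_eq_add_one.2 (hcount ▸ Multiset.count_pos.2 hN)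
    have h₁ := qmultinomial_mul_prod_qfact ν
    have h₂ := qmultinomial_mul_prod_qfact (E ::ₘ ν.erase N)
    rw [Step.prod_univ, hcount, hk] at h₁
    rw [Step.prod_univ, Multiset.count_cons_self, Multiset.count_cons_of_ne (by decide),
      Multiset.count_cons_of_ne (by decide), Multiset.count_erase_of_ne (by decide),
      Multiset.count_erase_self, Multiset.count_erase_of_ne (by decide), Multiset.card_cons,
      Multiset.card_erase_add_one hN, hcount, hk, Nat.add_sub_cancel] at h₂
    have h₃ := qbinom_mul_qfact_mul_qfact (m := 2 * (k + 1)) (u := k + 1) (v := k + 1) (by ring)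
    have h₄ := qbinom_mul_qfact_mul_qfact (m := Multiset.card ν) (u := ν.count D)
      (v := 2 * (k + 1)) (by omega)
    have hsucc : qint (k + 2) = qint (k + 1) + X ^ (k + 1) := qint_succ (k + 1)
    simp only [qfact] at h₁ h₂ h₃
    rw [hk]
    -- Clearing the denominators `[k+2]! [k+1]! [d]!`, this is `[k+2] - [k+1] = q ^ (k+1)`.
    refine mul_right_cancel₀ (b := qfact k * qint (k + 1) * qint (k + 2) *
      (qfact k * qint (k + 1)) * qfact (ν.count D)) (by simp [qfact_ne_zero, qint_ne_zero]) ?_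
    linear_combination qint (k + 2) ^ 2 * h₁ - qint (k + 2) * qint (k + 1) * h₂
      - X ^ (k + 1) * qint (k + 2) * qbinom (Multiset.card ν) (ν.count D) * qfact (ν.count D)
        * h₃
      - X ^ (k + 1) * qint (k + 2) * h₄ + qint (k + 2) * qfact (Multiset.card ν) * hsucc
  · have hN0 : ν.count N = 0 := Multiset.count_eq_zero.2 hN
    simp [qmultinomial, qint, hN0, ← hcount, hcard, qbinom_zero_right, qbinom_self]

lemma SchSet_eq_ballotWords {n l : ℕ} (hnl : n ≤ l) (hl : l ≤ 2 * n) :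
    SchSet n l = ballotWords (Multiset.replicate (l - n) E + Multiset.replicate (l - n) N +
      Multiset.replicate (2 * n - l) D) := by
  ext w
  have hlen := card_eq_count_E_add_count_N_add_count_D (w : Multiset Step)
  simp only [Multiset.coe_card, Multiset.coe_count] at hlen
  simp only [SchSet, DelSet, Finset.mem_filter, mem_Words, mem_ballotWords, Multiset.ext,
    Multiset.coe_count]
  refine and_congr_left' ⟨fun h z => ?_, fun h => ?_⟩
  · cases z <;> simp [Multiset.count_replicate] <;> omega
  · have hE := h E; have hN := h N; have hD := h D
    simp [Multiset.count_replicate] at hE hN hD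
    omega

/-- for any linear order with N < E, the maj generating function
over Schröder n-paths with l steps is
(q^{l-n}/[l-n+1]) · qbinom(2(l-n), l-n) · qbinom(l, 2n-l)
(stated with the denominator [l-n+1] cleared). -/
theorem maj_schroeder_NltE (n l : ℕ) (hnl : n ≤ l) (hl : l ≤ 2 * n)
    (rank : Step → ℕ) (hrank : Function.Injective rank) (hNE : rank N < rank E) :
    qint (l - n + 1) * ∑ w ∈ SchSet n l, (X : Polynomial ℚ) ^ maj rank w =
      X ^ (l - n) * (qbinom (2 * (l - n)) (l - n) * qbinom l (2 * n - l)) := by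
  rw [SchSet_eq_ballotWords hnl hl]
  set μ := Multiset.replicate (l - n) E + Multiset.replicate (l - n) N +
    Multiset.replicate (2 * n - l) D
  have hE : μ.count E = l - n := by simp [μ, Multiset.count_replicate]
  have hN : μ.count N = l - n := by simp [μ, Multiset.count_replicate]
  have hD : μ.count D = 2 * n - l := by simp [μ, Multiset.count_replicate]
  have hcard : Multiset.card μ = l := by simp [μ]; omega
  rw [sum_ballotWords hrank hNE (hN.trans hE.symm).le, ← hE,
    qint_mul_qmultinomial_sub (hN.trans hE.symm), hcard, hD]
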